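/- arXiv:2304.05589 — 7 statements merged into one kernel-verified Lean document; each statement's English description precedes it below -/
import Mathlib

section
/- Let G : ℝ^k → ℝ^n be continuously differentiable and injective, and let p_Z and q be probability measures on ℝ^k that are absolutely continuous with respect to Lebesgue measure, with q absolutely continuous with respect to p_Z. Let h = G♯q and P = G♯p_Z denote the push-forward measures on ℝ^n. Then the Kullback–Leibler divergence is preserved under the push-forward: KL(h ‖ P) = KL(q ‖ p_Z), i.e. ∫ log(dh/dP)(x) dh(x) = ∫ log(dq/dp_Z)(z) dq(z). Consequently, for every measurable likelihood function x ↦ p(y|x), the quantity E_{x∼h}[log p(y|x) + log(dP/dh)(x)] equals E_{z∼q}[log p(y|G(z)) + log(dp_Z/dq)(z)]; that is, the ELBO of the push-forward model equals the ELBOProxy computed in the latent space (Proposition on ELBOProxy equivalence). -/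
open MeasureTheory

/-! Since `G` is continuous and injective between Polish spaces it is a measurable embedding, and
the Radon–Nikodym derivative of the push-forwards pulls back along an embedding:
`d(G♯μ)/d(G♯ν) ∘ G = dμ/dν` holds `ν`-a.e. Changing variables in the integrals over `G♯q` then
turns both sides of each identity into the same latent-space integral. -/

theorem MeasurableEmbedding.integral_map_rnDeriv_map {α β E : Type*} [MeasurableSpace α]
    [MeasurableSpace β] [NormedAddCommGroup E] [NormedSpace ℝ E] {f : α → β}
    (hf : MeasurableEmbedding f) (μ ν ρ : Measure α) [SigmaFinite μ] [SigmaFinite ν]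
    (hρν : ρ ≪ ν) (F : β → ENNReal → E) :
    ∫ x, F x ((μ.map f).rnDeriv (ν.map f) x) ∂(ρ.map f) = ∫ z, F (f z) (μ.rnDeriv ν z) ∂ρ := by
  rw [hf.integral_map]
  refine integral_congr_ae ?_
  filter_upwards [hρν.ae_le (hf.rnDeriv_map μ ν)] with z hz
  rw [hz]

theorem stmt0_general {k n : ℕ}
    (G : (Fin k → ℝ) → (Fin n → ℝ)) (hG : ContDiff ℝ 1 G) (hGinj : Function.Injective G)
    (pZ q : Measure (Fin k → ℝ)) [IsProbabilityMeasure pZ] [IsProbabilityMeasure q]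
    (hqp : q ≪ pZ)
    (h P : Measure (Fin n → ℝ)) (hh : h = q.map G) (hP : P = pZ.map G) :
    (∫ x, Real.log ((h.rnDeriv P x).toReal) ∂h
        = ∫ z, Real.log ((q.rnDeriv pZ z).toReal) ∂q)
    ∧ ∀ f : (Fin n → ℝ) → ℝ, Measurable f → (∀ x, 0 ≤ f x) →
        ∫ x, (Real.log (f x) + Real.log ((P.rnDeriv h x).toReal)) ∂h
          = ∫ z, (Real.log (f (G z)) + Real.log ((pZ.rnDeriv q z).toReal)) ∂q := by
  have hGemb : MeasurableEmbedding G := hG.continuous.measurableEmbedding hGinj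
  subst hh hP
  refine ⟨hGemb.integral_map_rnDeriv_map q pZ q hqp fun _ r ↦ Real.log r.toReal, ?_⟩
  intro f _ _
  exact hGemb.integral_map_rnDeriv_map pZ q q Measure.AbsolutelyContinuous.rfl
    fun x r ↦ Real.log (f x) + Real.log r.toReal

/-- **ELBOProxy equivalence (Proposition).**
For a continuously differentiable injective `G : ℝᵏ → ℝⁿ` and probability measures
`pZ, q` on `ℝᵏ` absolutely continuous w.r.t. Lebesgue measure with `q ≪ pZ`,
the KL divergence is preserved under the push-forward `h = G♯q`, `P = G♯pZ`,
and consequently the ELBO of the push-forward model equals the ELBOProxy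
computed in the latent space. -/
theorem stmt0 {k n : ℕ}
    (G : (Fin k → ℝ) → (Fin n → ℝ)) (hG : ContDiff ℝ 1 G) (hGinj : Function.Injective G)
    (pZ q : Measure (Fin k → ℝ)) [IsProbabilityMeasure pZ] [IsProbabilityMeasure q]
    (hpZac : pZ ≪ volume) (hqac : q ≪ volume) (hqp : q ≪ pZ)
    (h P : Measure (Fin n → ℝ)) (hh : h = q.map G) (hP : P = pZ.map G) :
    (∫ x, Real.log ((h.rnDeriv P x).toReal) ∂h
        = ∫ z, Real.log ((q.rnDeriv pZ z).toReal) ∂q)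
    ∧ ∀ f : (Fin n → ℝ) → ℝ, Measurable f → (∀ x, 0 ≤ f x) →
        ∫ x, (Real.log (f x) + Real.log ((P.rnDeriv h x).toReal)) ∂h
          = ∫ z, (Real.log (f (G z)) + Real.log ((pZ.rnDeriv q z).toReal)) ∂q :=
  stmt0_general G hG hGinj pZ q hqp h P hh hP
end

section
/- Fix σ > 0, y ∈ ℝ^m, A ∈ ℝ^{m×n}, G ∈ ℝ^{n×k}, μ ∈ ℝ^k, and an invertible matrix U ∈ ℝ^{k×k}. Then the negative ELBOProxy for a Gaussian variational family admits the closed form: ∫ [ (1/(2σ²))‖y − A G (U z + μ)‖² + (1/2)‖U z + μ‖² + ℓ(U z + μ) ] dγ_k(z) = (1/(2σ²))(‖y‖² + ‖A G U‖_F² + ‖A G μ‖²) − (1/σ²)⟨y, A G μ⟩ + (1/2)(‖U‖_F² + ‖μ‖²) − log|det U| − k/2 − (k/2)·log(2π), where ℓ(v) := −(1/2)(v−μ)ᵀ(U Uᵀ)⁻¹(v−μ) − (k/2)·log(2π) − (1/2)·log|det(U Uᵀ)| is the log-density of the Gaussian N(μ, U Uᵀ) (Proposition: closed form of the linear-IGM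 loss). -/
/-!
Substituting `v = U z + μ`, the Gaussian log-density becomes
`-½‖z‖² - (k/2) log 2π - log |det U|`, and each of the other two terms is the squared norm of an
affine function `M z + b`. For a centred random vector with identity covariance,
`E ‖M z + b‖² = ‖M‖_F² + ‖b‖²`, so only the first two moments of `γ_k` enter.
-/

open MeasureTheory ProbabilityTheory Matrix

/-- The standard Gaussian measure on `ℝᵏ` (product of `k` copies of `N(0,1)`). -/
noncomputable def stdGaussian (k : ℕ) : Measure (Fin k → ℝ) :=
  Measure.pi fun _ => gaussianReal 0 1

structure IsCenteredIsotropic {ι : Type*} [Fintype ι] [DecidableEq ι]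
    (P : Measure (ι → ℝ)) : Prop where
  memLp_eval (i : ι) : MemLp (fun z => z i) 2 P
  integral_eval (i : ι) : ∫ z, z i ∂P = 0
  integral_eval_mul_eval (i j : ι) : ∫ z, z i * z j ∂P = if i = j then 1 else 0

namespace IsCenteredIsotropic

variable {ι : Type*} [Fintype ι] [DecidableEq ι] {P : Measure (ι → ℝ)}

lemma memLp_dotProduct (hP : IsCenteredIsotropic P) (v : ι → ℝ) :
    MemLp (fun z => v ⬝ᵥ z) 2 P :=
  memLp_finsetSum _ fun i _ => (hP.memLp_eval i).const_mul (v i)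

lemma integral_dotProduct (hP : IsCenteredIsotropic P) [IsFiniteMeasure P] (v : ι → ℝ) :
    ∫ z, v ⬝ᵥ z ∂P = 0 := by
  simp only [dotProduct]
  rw [integral_finsetSum _ fun i _ => ((hP.memLp_eval i).integrable one_le_two).const_mul _]
  simp [integral_const_mul, hP.integral_eval]

lemma integral_dotProduct_sq (hP : IsCenteredIsotropic P) (v : ι → ℝ) :
    ∫ z, (v ⬝ᵥ z) ^ 2 ∂P = ∑ i, v i ^ 2 := by
  have hexpand : ∀ z : ι → ℝ, (v ⬝ᵥ z) ^ 2 = ∑ i, ∑ j, v i * v j * (z i * z j) := fun z => by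
    simp only [dotProduct, sq, Finset.sum_mul_sum]
    exact Finset.sum_congr rfl fun i _ => Finset.sum_congr rfl fun j _ => by ring
  have hprod : ∀ i j, Integrable (fun z : ι → ℝ => z i * z j) P := fun i j =>
    (hP.memLp_eval i).integrable_mul (hP.memLp_eval j)
  simp only [hexpand]
  rw [integral_finsetSum _ fun i _ => integrable_finsetSum _ fun j _ => (hprod i j).const_mul _]
  simp only [integral_finsetSum _ fun j _ => (hprod _ j).const_mul _, integral_const_mul,
    hP.integral_eval_mul_eval, mul_ite, mul_one, mul_zero, Finset.sum_ite_eq, Finset.mem_univ,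
    if_true, sq]

lemma integrable_sq_dotProduct_add (hP : IsCenteredIsotropic P) [IsFiniteMeasure P]
    (v : ι → ℝ) (c : ℝ) :
    Integrable (fun z => (v ⬝ᵥ z + c) ^ 2) P :=
  ((hP.memLp_dotProduct v).add (memLp_const c)).integrable_sq

lemma integral_sq_dotProduct_add (hP : IsCenteredIsotropic P) [IsProbabilityMeasure P]
    (v : ι → ℝ) (c : ℝ) :
    ∫ z, (v ⬝ᵥ z + c) ^ 2 ∂P = ∑ i, v i ^ 2 + c ^ 2 := by
  have hsq : Integrable (fun z => (v ⬝ᵥ z) ^ 2) P := (hP.memLp_dotProduct v).integrable_sq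
  have hlin : Integrable (fun z => 2 * c * (v ⬝ᵥ z)) P :=
    ((hP.memLp_dotProduct v).integrable one_le_two).const_mul (2 * c)
  calc ∫ z, (v ⬝ᵥ z + c) ^ 2 ∂P = ∫ z, ((v ⬝ᵥ z) ^ 2 + 2 * c * (v ⬝ᵥ z) + c ^ 2) ∂P := by
        congr with z; ring
    _ = ∑ i, v i ^ 2 + c ^ 2 := by
      rw [integral_add (by exact hsq.add hlin) (integrable_const _), integral_add hsq hlin,
        integral_const_mul, hP.integral_dotProduct, hP.integral_dotProduct_sq]
      simp

lemma integrable_sum_sq_mulVec_add (hP : IsCenteredIsotropic P) [IsFiniteMeasure P]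
    {κ : Type*} [Fintype κ] (M : Matrix κ ι ℝ) (b : κ → ℝ) :
    Integrable (fun z => ∑ i, ((M *ᵥ z + b) i) ^ 2) P :=
  integrable_finsetSum _ fun i _ => hP.integrable_sq_dotProduct_add (M i) (b i)

lemma integral_sum_sq_mulVec_add (hP : IsCenteredIsotropic P) [IsProbabilityMeasure P]
    {κ : Type*} [Fintype κ] (M : Matrix κ ι ℝ) (b : κ → ℝ) :
    ∫ z, ∑ i, ((M *ᵥ z + b) i) ^ 2 ∂P = ∑ i, ∑ j, M i j ^ 2 + ∑ i, b i ^ 2 := by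
  change ∫ z, ∑ i, (M i ⬝ᵥ z + b i) ^ 2 ∂P = _
  rw [integral_finsetSum _ fun i _ => hP.integrable_sq_dotProduct_add (M i) (b i)]
  simp only [hP.integral_sq_dotProduct_add, Finset.sum_add_distrib]

lemma integrable_sum_sq_eval (hP : IsCenteredIsotropic P) [IsFiniteMeasure P] :
    Integrable (fun z => ∑ i, z i ^ 2) P :=
  integrable_finsetSum _ fun i _ => (hP.memLp_eval i).integrable_sq

lemma integral_sum_sq_eval (hP : IsCenteredIsotropic P) [IsFiniteMeasure P] :
    ∫ z, ∑ i, z i ^ 2 ∂P = Fintype.card ι := by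
  rw [integral_finsetSum _ fun i _ => (hP.memLp_eval i).integrable_sq]
  simp [sq, hP.integral_eval_mul_eval]

end IsCenteredIsotropic

instance (k : ℕ) : IsProbabilityMeasure (stdGaussian k) :=
  inferInstanceAs (IsProbabilityMeasure (Measure.pi fun _ : Fin k => gaussianReal 0 1))

lemma isCenteredIsotropic_stdGaussian (k : ℕ) : IsCenteredIsotropic (stdGaussian k) where
  memLp_eval i :=
    (memLp_id_gaussianReal' 2 (by simp)).comp_measurePreserving (measurePreserving_eval _ i)
  integral_eval i := by simp [_root_.stdGaussian, integral_eval]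
  integral_eval_mul_eval i j := by
    rcases eq_or_ne i j with rfl | hij
    · have hvar := variance_fun_id_gaussianReal (μ := 0) (v := 1)
      rw [variance_eq_integral measurable_id'.aemeasurable] at hvar
      rw [if_pos rfl, _root_.stdGaussian, integral_comp_eval (μ := fun _ => gaussianReal 0 1)
        (f := fun x : ℝ => x * x) (by fun_prop)]
      simpa [← sq] using hvar
    · have hindep := (iIndepFun_pi (μ := fun _ : Fin k => gaussianReal 0 1)
        (X := fun _ x => x) fun _ => aemeasurable_id).indepFun hij
      rw [if_neg hij, _root_.stdGaussian, hindep.integral_fun_mul_eq_mul_integral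
        (measurable_pi_apply i).aestronglyMeasurable (measurable_pi_apply j).aestronglyMeasurable]
      simp [integral_eval]

lemma mulVec_dotProduct_inv_mul_transpose_mulVec {R n : Type*} [CommRing R] [Fintype n]
    [DecidableEq n] {U : Matrix n n R} (hU : IsUnit U.det) (z : n → R) :
    U *ᵥ z ⬝ᵥ ((U * Uᵀ)⁻¹ *ᵥ (U *ᵥ z)) = z ⬝ᵥ z := by
  rw [Matrix.mul_inv_rev, ← mulVec_mulVec, mulVec_mulVec _ U⁻¹, nonsing_inv_mul U hU,
    one_mulVec, ← transpose_nonsing_inv, dotProduct_mulVec, vecMul_transpose, mulVec_mulVec,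
    nonsing_inv_mul U hU, one_mulVec]

lemma sum_sub_sq_eq {ι : Type*} [Fintype ι] (x w : ι → ℝ) :
    ∑ i, (x - w) i ^ 2 = ∑ i, x i ^ 2 - 2 * (x ⬝ᵥ w) + ∑ i, w i ^ 2 := by
  simp only [Pi.sub_apply, sub_sq, Finset.sum_add_distrib, Finset.sum_sub_distrib,
    Finset.mul_sum, dotProduct, mul_assoc]

lemma log_abs_det_mul_transpose {n : Type*} [Fintype n] [DecidableEq n] (U : Matrix n n ℝ) :
    Real.log |(U * Uᵀ).det| = 2 * Real.log |U.det| := by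
  rw [det_mul, det_transpose, abs_mul, ← sq, Real.log_pow, Nat.cast_ofNat]

theorem stmt2_general {m n k : ℕ} (σ : ℝ) (y : Fin m → ℝ)
    (A : Matrix (Fin m) (Fin n) ℝ) (G : Matrix (Fin n) (Fin k) ℝ)
    (μ : Fin k → ℝ) (U : Matrix (Fin k) (Fin k) ℝ) (hU : IsUnit U.det)
    (ℓ : (Fin k → ℝ) → ℝ)
    (hℓ : ∀ v, ℓ v = -(1/2) * ((v - μ) ⬝ᵥ ((U * Uᵀ)⁻¹ *ᵥ (v - μ)))
        - ((k : ℝ)/2) * Real.log (2 * Real.pi) - (1/2) * Real.log |(U * Uᵀ).det|) :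
    ∫ z : Fin k → ℝ,
        ((1/(2*σ^2)) * (∑ i, (y i - ((A * G) *ᵥ (U *ᵥ z + μ)) i) ^ 2)
          + (1/2) * (∑ i, ((U *ᵥ z + μ) i) ^ 2)
          + ℓ (U *ᵥ z + μ)) ∂(stdGaussian k)
      = (1/(2*σ^2)) * ((∑ i, (y i) ^ 2) + (∑ i, ∑ j, ((A * G * U) i j) ^ 2)
            + (∑ i, (((A * G) *ᵥ μ) i) ^ 2))
        - (1/σ^2) * (y ⬝ᵥ ((A * G) *ᵥ μ))
        + (1/2) * ((∑ i, ∑ j, (U i j) ^ 2) + (∑ i, (μ i) ^ 2))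
        - Real.log |U.det| - (k : ℝ)/2 - ((k : ℝ)/2) * Real.log (2 * Real.pi) := by
  have hP := isCenteredIsotropic_stdGaussian k
  have hresidual : ∀ z i, y i - ((A * G) *ᵥ (U *ᵥ z + μ)) i
      = ((-(A * G * U)) *ᵥ z + (y - (A * G) *ᵥ μ)) i := fun z i => by
    rw [mulVec_add, mulVec_mulVec, neg_mulVec]
    simp only [Pi.add_apply, Pi.sub_apply, Pi.neg_apply]
    ring
  have hquad : ∀ z, (U *ᵥ z + μ - μ) ⬝ᵥ ((U * Uᵀ)⁻¹ *ᵥ (U *ᵥ z + μ - μ)) = ∑ i, z i ^ 2 :=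
    fun z => by
      rw [add_sub_cancel_right, mulVec_dotProduct_inv_mul_transpose_mulVec hU]
      simp only [dotProduct, sq]
  calc _ = ∫ z, ((1/(2*σ^2)) * ∑ i, (((-(A * G * U)) *ᵥ z + (y - (A * G) *ᵥ μ)) i) ^ 2
          + (1/2) * ∑ i, ((U *ᵥ z + μ) i) ^ 2 - (1/2) * ∑ i, z i ^ 2
          - (((k : ℝ)/2) * Real.log (2 * Real.pi) + Real.log |U.det|)) ∂(stdGaussian k) := by
        congr with z
        simp only [hℓ, hquad, log_abs_det_mul_transpose, hresidual]
        ring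
    _ = _ := by
      have h₁ := (hP.integrable_sum_sq_mulVec_add (-(A * G * U)) (y - (A * G) *ᵥ μ)).const_mul
        (1/(2*σ^2))
      have h₂ := (hP.integrable_sum_sq_mulVec_add U μ).const_mul (1/2)
      have h₃ := hP.integrable_sum_sq_eval.const_mul (1/2)
      rw [integral_sub (by exact (h₁.add h₂).sub h₃) (integrable_const _),
        integral_sub (by exact h₁.add h₂) h₃, integral_add h₁ h₂, integral_const_mul,
        integral_const_mul, integral_const_mul, hP.integral_sum_sq_mulVec_add,
        hP.integral_sum_sq_mulVec_add, hP.integral_sum_sq_eval, integral_const]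
      simp only [probReal_univ, one_smul, Fintype.card_fin, sum_sub_sq_eq, Matrix.neg_apply, neg_sq]
      ring

/-- **Closed form of the linear-IGM negative ELBOProxy (Proposition).**
Fix `σ > 0`, `y ∈ ℝᵐ`, `A ∈ ℝ^{m×n}`, `G ∈ ℝ^{n×k}`, `μ ∈ ℝᵏ` and invertible
`U ∈ ℝ^{k×k}`. With `ℓ` the log-density of the Gaussian `N(μ, UUᵀ)`, the
negative ELBOProxy for the Gaussian variational family admits the stated
closed form. -/
theorem stmt2 {m n k : ℕ} (σ : ℝ) (hσ : 0 < σ) (y : Fin m → ℝ)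
    (A : Matrix (Fin m) (Fin n) ℝ) (G : Matrix (Fin n) (Fin k) ℝ)
    (μ : Fin k → ℝ) (U : Matrix (Fin k) (Fin k) ℝ) (hU : IsUnit U.det)
    (ℓ : (Fin k → ℝ) → ℝ)
    (hℓ : ∀ v, ℓ v = -(1/2) * ((v - μ) ⬝ᵥ ((U * Uᵀ)⁻¹ *ᵥ (v - μ)))
        - ((k : ℝ)/2) * Real.log (2 * Real.pi) - (1/2) * Real.log |(U * Uᵀ).det|) :
    ∫ z : Fin k → ℝ,
        ((1/(2*σ^2)) * (∑ i, (y i - ((A * G) *ᵥ (U *ᵥ z + μ)) i) ^ 2)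
          + (1/2) * (∑ i, ((U *ᵥ z + μ) i) ^ 2)
          + ℓ (U *ᵥ z + μ)) ∂(stdGaussian k)
      = (1/(2*σ^2)) * ((∑ i, (y i) ^ 2) + (∑ i, ∑ j, ((A * G * U) i j) ^ 2)
            + (∑ i, (((A * G) *ᵥ μ) i) ^ 2))
        - (1/σ^2) * (y ⬝ᵥ ((A * G) *ᵥ μ))
        + (1/2) * ((∑ i, ∑ j, (U i j) ^ 2) + (∑ i, (μ i) ^ 2))
        - Real.log |U.det| - (k : ℝ)/2 - ((k : ℝ)/2) * Real.log (2 * Real.pi) :=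
  stmt2_general σ y A G μ U hU ℓ hℓ
end

section
/- Fix σ > 0, let A ∈ ℝ^{m×n} have rank m with k ≤ m ≤ n, let y⁽¹⁾,…,y⁽ᴺ⁾ ∈ ℝ^m, and set Y_N := (1/N)∑ᵢ y⁽ⁱ⁾(y⁽ⁱ⁾)ᵀ. Suppose E ∈ ℝ^{m×k} has orthonormal columns, L ∈ ℝ^{k×k} is diagonal with every diagonal entry L_ii ≥ σ², Y_N E = E L, and R, R̃ ∈ ℝ^{k×k} are orthogonal. Let G_* ∈ ℝ^{n×k} satisfy A G_* = E (L − σ² I)^{1/2} R, and define μ_i^* := (G_*ᵀAᵀA G_* + σ² I)⁻¹ G_*ᵀAᵀ y⁽ⁱ⁾ and U_i^* := σ (G_*ᵀAᵀA G_* + σ² I)^{−1/2} R̃ for i = 1,…,N. Then (G_*, {μ_i^*, U_i^*}) is a stationary point of the loss L(G,{μ_i,U_i}) = (1/N)∑ᵢ [ (1/(2σ²))(‖y⁽ⁱ⁾‖² + ‖A G U_i‖_F² + ‖A G μ_i‖²) − (1/σ²)⟨y⁽ⁱ⁾, A G μ_i⟩ + (1/2)(‖U_i‖_F² + ‖μ_i‖²)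 − log|det U_i| ]; that is, the following three gradient equations all hold: (1/N)∑ᵢ AᵀA G_* (U_i^* U_i^{*ᵀ} + μ_i^* μ_i^{*ᵀ}) = (1/N)∑ᵢ Aᵀ y⁽ⁱ⁾ μ_i^{*ᵀ}; σ⁻² G_*ᵀAᵀA G_* U_i^* + U_i^* − (U_i^{*ᵀ})⁻¹ = 0 for all i; and σ⁻²(G_*ᵀAᵀA G_* μ_i^* − G_*ᵀAᵀ y⁽ⁱ⁾) + μ_i^* = 0 for all i (Theorem: stationary points of the linear-IGM ELBOProxy loss). -/
/-!
Write `B = A G_*` and `S = BᵀB + σ²I = W²`. Since `B = E D R` with `D² + σ²I = L` diagonal, we get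
`S = Rᵀ L R` and hence `Y_N B = E L D R = B S`. With `μ_i = S⁻¹ Bᵀ y⁽ⁱ⁾` and `U_i U_iᵀ = σ² S⁻¹`,
averaging over the samples turns both sides of the first equation into `Aᵀ B`, because
`Y_N B S⁻¹ = B` and `σ² S⁻¹ + S⁻¹ BᵀB = I`. The other two equations are `S = W²` in disguise.
-/

open Matrix

namespace Matrix

variable {α ι l m n k : Type*} [Field α] [Fintype m] [Fintype k] [DecidableEq k]

omit [DecidableEq k] in
lemma vecMulVec_mulVec_mulVec [Fintype n] (P : Matrix l m α) (Q : Matrix n k α) (u : m → α)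
    (v : k → α) : vecMulVec (P *ᵥ u) (Q *ᵥ v) = P * vecMulVec u v * Qᵀ := by
  rw [mul_vecMulVec, vecMulVec_mul, vecMul_transpose]

omit [DecidableEq k] in
lemma inv_card_smul_sum_mul_mul [Fintype ι] (P : Matrix l m α) (X : ι → Matrix m k α)
    (Q : Matrix k n α) :
    (Fintype.card ι : α)⁻¹ • ∑ i, P * X i * Q = P * ((Fintype.card ι : α)⁻¹ • ∑ i, X i) * Q := by
  simp only [← Matrix.sum_mul, ← Matrix.mul_sum, Matrix.mul_smul, Matrix.smul_mul]

lemma mul_eq_mul_transpose_mul_self_add_smul {Y : Matrix m m α} {E : Matrix m k α}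
    {L d : k → α} {R : Matrix k k α} (c : α) (hE : Eᵀ * E = 1) (hR : Rᵀ * R = 1)
    (hY : Y * E = E * diagonal L) (hd : ∀ i, d i * d i + c = L i) :
    Y * (E * diagonal d * R) =
      E * diagonal d * R * ((E * diagonal d * R)ᵀ * (E * diagonal d * R) + c • 1) := by
  have hgram : (E * diagonal d * R)ᵀ * (E * diagonal d * R) + c • 1 = Rᵀ * diagonal L * R := by
    have hc : (c • 1 : Matrix k k α) = Rᵀ * diagonal (fun _ => c) * R := by
      rw [← smul_one_eq_diagonal, Matrix.mul_smul, Matrix.smul_mul, Matrix.mul_one, hR]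
    rw [hc, transpose_mul, transpose_mul, diagonal_transpose]
    calc Rᵀ * (diagonal d * Eᵀ) * (E * diagonal d * R) + Rᵀ * diagonal (fun _ => c) * R
        = Rᵀ * (diagonal d * (Eᵀ * E) * diagonal d + diagonal (fun _ => c)) * R := by
          simp only [Matrix.mul_add, Matrix.add_mul, Matrix.mul_assoc]
      _ = Rᵀ * diagonal L * R := by
          rw [hE, Matrix.mul_one, diagonal_mul_diagonal, diagonal_add]
          exact congrArg (fun D => Rᵀ * diagonal D * R) (funext hd)
  rw [hgram]
  calc Y * (E * diagonal d * R) = E * diagonal L * diagonal d * R := by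
        simp only [← Matrix.mul_assoc, hY]
    _ = E * diagonal d * (R * Rᵀ) * diagonal L * R := by
        rw [mul_eq_one_comm.mp hR, Matrix.mul_one]
        simp only [Matrix.mul_assoc, diagonal_mul_diagonal, mul_comm (L _)]
    _ = _ := by simp only [Matrix.mul_assoc]

lemma inv_card_smul_sum_mul_add_vecMulVec_eq [Fintype ι] [Fintype n] {P : Matrix n m α}
    {B : Matrix m k α} {S : Matrix k k α} {c : α} (hι : (Fintype.card ι : α) ≠ 0)
    (hS : IsUnit S.det) (hSB : Bᵀ * B + c • 1 = S) {y : ι → m → α}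
    (hYB : ((Fintype.card ι : α)⁻¹ • ∑ i, vecMulVec (y i) (y i)) * B = B * S)
    {μ : ι → k → α} (hμ : ∀ i, μ i = S⁻¹ *ᵥ (Bᵀ *ᵥ y i))
    {U : ι → Matrix k k α} (hU : ∀ i, U i * (U i)ᵀ = c • S⁻¹) :
    (Fintype.card ι : α)⁻¹ • ∑ i, P * B * (U i * (U i)ᵀ + vecMulVec (μ i) (μ i)) =
      (Fintype.card ι : α)⁻¹ • ∑ i, vecMulVec (P *ᵥ y i) (μ i) := by
  have hST : Sᵀ = S := by
    rw [← hSB, transpose_add, transpose_mul, transpose_transpose, transpose_smul, transpose_one]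
  have hSBt : (S⁻¹ * Bᵀ)ᵀ = B * S⁻¹ := by
    rw [transpose_mul, transpose_transpose, transpose_nonsing_inv, hST]
  have hμ' : ∀ i, μ i = (S⁻¹ * Bᵀ) *ᵥ y i := fun i => by rw [hμ, mulVec_mulVec]
  have hlhs : ∀ i, P * B * (U i * (U i)ᵀ + vecMulVec (μ i) (μ i)) =
      P * B * (c • S⁻¹) + (P * B * S⁻¹ * Bᵀ) * vecMulVec (y i) (y i) * (B * S⁻¹) := fun i => by
    rw [hU, hμ', vecMulVec_mulVec_mulVec, hSBt]
    simp only [Matrix.mul_add, Matrix.mul_assoc]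
  have hrhs : ∀ i, vecMulVec (P *ᵥ y i) (μ i) = P * vecMulVec (y i) (y i) * (B * S⁻¹) :=
    fun i => by rw [hμ', vecMulVec_mulVec_mulVec, hSBt]
  simp only [hlhs, hrhs, Finset.sum_add_distrib, smul_add, inv_card_smul_sum_mul_mul]
  set Y := (Fintype.card ι : α)⁻¹ • ∑ i, vecMulVec (y i) (y i)
  have hYBS : Y * (B * S⁻¹) = B := by
    rw [← Matrix.mul_assoc, hYB, Matrix.mul_assoc, mul_nonsing_inv S hS, Matrix.mul_one]
  have hSinv : c • S⁻¹ + S⁻¹ * (Bᵀ * B) = 1 := by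
    rw [← mul_smul_one, ← Matrix.mul_add, add_comm, hSB, nonsing_inv_mul S hS]
  rw [Finset.sum_const, Finset.card_univ, ← Nat.cast_smul_eq_nsmul α, smul_smul,
    inv_mul_cancel₀ hι, one_smul]
  simp only [Matrix.mul_assoc]
  rw [hYBS, ← Matrix.mul_add, ← Matrix.mul_add, hSinv, Matrix.mul_one]

omit [Fintype m] in
lemma smul_inv_mul_mul_transpose_self {W Q : Matrix k k α} (hW : Wᵀ = W) (hQ : Qᵀ * Q = 1)
    (c : α) : (c • W⁻¹ * Q) * (c • W⁻¹ * Q)ᵀ = c ^ 2 • (W * W)⁻¹ := by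
  rw [transpose_mul, transpose_smul, transpose_nonsing_inv, hW, mul_inv_rev, sq, ← smul_smul]
  simp only [Matrix.mul_smul, Matrix.smul_mul, Matrix.mul_assoc]
  rw [← Matrix.mul_assoc Q, mul_eq_one_comm.mp hQ, Matrix.one_mul]

omit [Fintype m] in
lemma transpose_smul_inv_mul_inv {W Q : Matrix k k α} (hW : Wᵀ = W) (hWdet : IsUnit W.det)
    (hQ : Qᵀ * Q = 1) {c : α} (hc : c ≠ 0) :
    (c • W⁻¹ * Q)ᵀ⁻¹ = (c ^ 2)⁻¹ • (W * W) * (c • W⁻¹ * Q) := by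
  refine inv_eq_right_inv ?_
  rw [transpose_mul, transpose_smul, transpose_nonsing_inv, hW]
  calc Qᵀ * (c • W⁻¹) * ((c ^ 2)⁻¹ • (W * W) * (c • W⁻¹ * Q))
      = (c * (c ^ 2)⁻¹ * c) • (Qᵀ * (W⁻¹ * W) * (W * W⁻¹) * Q) := by
        simp only [Matrix.mul_smul, Matrix.smul_mul, smul_smul, Matrix.mul_assoc]
    _ = 1 := by
        rw [nonsing_inv_mul W hWdet, mul_nonsing_inv W hWdet, Matrix.mul_one, Matrix.mul_one, hQ,
          show c * (c ^ 2)⁻¹ * c = 1 by field_simp, one_smul]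

omit [Fintype m] in
lemma inv_smul_mulVec_inv_mulVec_sub_add_eq_zero {M S : Matrix k k α} {c : α} (hS : IsUnit S.det)
    (hM : M + c • 1 = S) (hc : c ≠ 0) (v : k → α) :
    c⁻¹ • (M *ᵥ (S⁻¹ *ᵥ v) - v) + S⁻¹ *ᵥ v = 0 := by
  have hMv : M *ᵥ (S⁻¹ *ᵥ v) = v - c • S⁻¹ *ᵥ v := by
    rw [eq_sub_of_add_eq hM, sub_mulVec, mulVec_mulVec, mul_nonsing_inv S hS, one_mulVec,
      smul_mulVec, one_mulVec]
  rw [hMv, sub_sub_cancel_left, smul_neg, smul_smul, inv_mul_cancel₀ hc, one_smul,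
    neg_add_cancel]

end Matrix

theorem stmt6_general {m n k N : ℕ} (hN : 0 < N) (σ : ℝ) (hσ : 0 < σ)
    (A : Matrix (Fin m) (Fin n) ℝ)
    (y : Fin N → Fin m → ℝ)
    (YN : Matrix (Fin m) (Fin m) ℝ)
    (hYN : YN = (N : ℝ)⁻¹ • ∑ i, Matrix.vecMulVec (y i) (y i))
    (E : Matrix (Fin m) (Fin k) ℝ) (hE : Eᵀ * E = 1)
    (L : Fin k → ℝ) (hL : ∀ i, σ ^ 2 ≤ L i)
    (hEig : YN * E = E * Matrix.diagonal L)
    (R Rt : Matrix (Fin k) (Fin k) ℝ) (hR : Rᵀ * R = 1) (hRt : Rtᵀ * Rt = 1)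
    (Gs : Matrix (Fin n) (Fin k) ℝ)
    (hGs : A * Gs = E * Matrix.diagonal (fun i => Real.sqrt (L i - σ ^ 2)) * R)
    (W : Matrix (Fin k) (Fin k) ℝ) (hWpd : W.PosDef)
    (hW : W * W = Gsᵀ * Aᵀ * A * Gs + σ ^ 2 • (1 : Matrix (Fin k) (Fin k) ℝ))
    (μ : Fin N → Fin k → ℝ)
    (hμ : ∀ i, μ i = (Gsᵀ * Aᵀ * A * Gs + σ ^ 2 • (1 : Matrix (Fin k) (Fin k) ℝ))⁻¹
        *ᵥ (Gsᵀ *ᵥ (Aᵀ *ᵥ y i)))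
    (U : Fin N → Matrix (Fin k) (Fin k) ℝ)
    (hU : ∀ i, U i = σ • W⁻¹ * Rt) :
    ((N : ℝ)⁻¹ • ∑ i, Aᵀ * A * Gs * (U i * (U i)ᵀ + Matrix.vecMulVec (μ i) (μ i))
        = (N : ℝ)⁻¹ • ∑ i, Matrix.vecMulVec (Aᵀ *ᵥ y i) (μ i))
    ∧ (∀ i, (σ ^ 2)⁻¹ • (Gsᵀ * Aᵀ * A * Gs) * U i + U i - ((U i)ᵀ)⁻¹ = 0)
    ∧ (∀ i, (σ ^ 2)⁻¹ • ((Gsᵀ * Aᵀ * A * Gs) *ᵥ μ i - Gsᵀ *ᵥ (Aᵀ *ᵥ y i)) + μ i = 0) := by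
  have hσ2 : σ ^ 2 ≠ 0 := by positivity
  have hGram : Gsᵀ * Aᵀ * A * Gs = (A * Gs)ᵀ * (A * Gs) := by
    rw [transpose_mul]; simp only [Matrix.mul_assoc]
  set S := Gsᵀ * Aᵀ * A * Gs + σ ^ 2 • (1 : Matrix (Fin k) (Fin k) ℝ) with hS
  have hWT : Wᵀ = W := hWpd.isHermitian
  have hWdet : IsUnit W.det := (isUnit_iff_isUnit_det W).mp hWpd.isUnit
  have hSdet : IsUnit S.det := by rw [← hW, det_mul]; exact hWdet.mul hWdet
  refine ⟨?_, fun i => ?_, fun i => ?_⟩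
  · have hYB : YN * (A * Gs) = A * Gs * S := by
      have hd : ∀ i, √(L i - σ ^ 2) * √(L i - σ ^ 2) + σ ^ 2 = L i := fun i => by
        rw [Real.mul_self_sqrt (sub_nonneg.mpr (hL i)), sub_add_cancel]
      rw [hS, hGram, hGs]
      exact mul_eq_mul_transpose_mul_self_add_smul (σ ^ 2) hE hR hEig hd
    have hμ' : ∀ i, μ i = S⁻¹ *ᵥ ((A * Gs)ᵀ *ᵥ y i) := fun i => by
      rw [hμ i, transpose_mul, ← mulVec_mulVec]
    have hUU : ∀ i, U i * (U i)ᵀ = σ ^ 2 • S⁻¹ := fun i => by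
      rw [hU i, smul_inv_mul_mul_transpose_self hWT hRt, hW]
    have := inv_card_smul_sum_mul_add_vecMulVec_eq (P := Aᵀ) (by simpa using hN.ne') hSdet
      (by rw [hS, hGram]) (by rwa [Fintype.card_fin, ← hYN]) hμ' hUU
    rwa [Fintype.card_fin, ← Matrix.mul_assoc Aᵀ A Gs] at this
  · rw [hU i, transpose_smul_inv_mul_inv hWT hWdet hRt hσ.ne', hW, smul_add, Matrix.add_mul,
      smul_smul, inv_mul_cancel₀ hσ2, one_smul, Matrix.one_mul, sub_self]
  · rw [hμ i]
    exact inv_smul_mulVec_inv_mulVec_sub_add_eq_zero hSdet rfl hσ2 _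

/-- **Stationary points of the linear-IGM ELBOProxy loss (Theorem).**
Fix `σ > 0`, let `A ∈ ℝ^{m×n}` have rank `m` with `k ≤ m ≤ n`, measurements
`y⁽¹⁾,…,y⁽ᴺ⁾ ∈ ℝᵐ` with sample covariance `Y_N`. Suppose `E` has orthonormal
columns, `L` is diagonal with entries `≥ σ²`, `Y_N E = E L`, and `R, R̃` are
orthogonal. Let `G_*` satisfy `A G_* = E (L − σ² I)^{1/2} R`, let `W` be the
unique positive definite square root of `G_*ᵀAᵀA G_* + σ² I`, and set
`μ_i^* = (G_*ᵀAᵀA G_* + σ² I)⁻¹ G_*ᵀAᵀ y⁽ⁱ⁾` and `U_i^* = σ W⁻¹ R̃`.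
Then the three gradient equations of the loss all hold. -/
theorem stmt6 {m n k N : ℕ} (hN : 0 < N) (σ : ℝ) (hσ : 0 < σ)
    (A : Matrix (Fin m) (Fin n) ℝ) (hA : A.rank = m) (hkm : k ≤ m) (hmn : m ≤ n)
    (y : Fin N → Fin m → ℝ)
    (YN : Matrix (Fin m) (Fin m) ℝ)
    (hYN : YN = (N : ℝ)⁻¹ • ∑ i, Matrix.vecMulVec (y i) (y i))
    (E : Matrix (Fin m) (Fin k) ℝ) (hE : Eᵀ * E = 1)
    (L : Fin k → ℝ) (hL : ∀ i, σ ^ 2 ≤ L i)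
    (hEig : YN * E = E * Matrix.diagonal L)
    (R Rt : Matrix (Fin k) (Fin k) ℝ) (hR : Rᵀ * R = 1) (hRt : Rtᵀ * Rt = 1)
    (Gs : Matrix (Fin n) (Fin k) ℝ)
    (hGs : A * Gs = E * Matrix.diagonal (fun i => Real.sqrt (L i - σ ^ 2)) * R)
    (W : Matrix (Fin k) (Fin k) ℝ) (hWpd : W.PosDef)
    (hW : W * W = Gsᵀ * Aᵀ * A * Gs + σ ^ 2 • (1 : Matrix (Fin k) (Fin k) ℝ))
    (μ : Fin N → Fin k → ℝ)
    (hμ : ∀ i, μ i = (Gsᵀ * Aᵀ * A * Gs + σ ^ 2 • (1 : Matrix (Fin k) (Fin k) ℝ))⁻¹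
        *ᵥ (Gsᵀ *ᵥ (Aᵀ *ᵥ y i)))
    (U : Fin N → Matrix (Fin k) (Fin k) ℝ)
    (hU : ∀ i, U i = σ • W⁻¹ * Rt) :
    ((N : ℝ)⁻¹ • ∑ i, Aᵀ * A * Gs * (U i * (U i)ᵀ + Matrix.vecMulVec (μ i) (μ i))
        = (N : ℝ)⁻¹ • ∑ i, Matrix.vecMulVec (Aᵀ *ᵥ y i) (μ i))
    ∧ (∀ i, (σ ^ 2)⁻¹ • (Gsᵀ * Aᵀ * A * Gs) * U i + U i - ((U i)ᵀ)⁻¹ = 0)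
    ∧ (∀ i, (σ ^ 2)⁻¹ • ((Gsᵀ * Aᵀ * A * Gs) *ᵥ μ i - Gsᵀ *ᵥ (Aᵀ *ᵥ y i)) + μ i = 0) :=
  stmt6_general hN σ hσ A y YN hYN E hE L hL hEig R Rt hR hRt Gs hGs W hWpd hW μ hμ U hU
end

section
/- Let B ∈ ℝ^{m×k}, σ > 0, and let R̃ ∈ ℝ^{k×k} be orthogonal. Then U := σ (BᵀB + σ² I)^{−1/2} R̃ is invertible and satisfies the stationarity equation σ⁻² BᵀB U + U − (Uᵀ)⁻¹ = 0. -/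
open Matrix

/-! With `W = (BᵀB + σ²I)^{1/2}` symmetric and `R̃` orthogonal, `U = σ W⁻¹ R̃` has
`(Uᵀ)⁻¹ = σ⁻¹ W R̃`, while `σ⁻² BᵀB U + U = σ⁻² W² U = σ⁻¹ W R̃` as well. -/

namespace Matrix

variable {n K : Type*} [Fintype n] [DecidableEq n] [Field K]
  {W R : Matrix n n K} {c : K}

theorem isUnit_smul_nonsing_inv_mul (hc : c ≠ 0) (hW : IsUnit W.det) (hR : Rᵀ * R = 1) :
    IsUnit (c • W⁻¹ * R) := by
  rw [isUnit_iff_isUnit_det, det_mul, det_smul]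
  exact ((hc.isUnit.pow _).mul (isUnit_nonsing_inv_det W hW)).mul (isUnit_det_of_left_inverse hR)

theorem transpose_smul_nonsing_inv_mul_inv (hc : c ≠ 0) (hW : IsUnit W.det) (hWs : Wᵀ = W)
    (hR : Rᵀ * R = 1) : ((c • W⁻¹ * R)ᵀ)⁻¹ = c⁻¹ • (W * R) := by
  apply inv_eq_right_inv
  rw [transpose_mul, transpose_smul, transpose_nonsing_inv, hWs]
  simp only [Matrix.mul_smul, Matrix.smul_mul, smul_smul, Matrix.mul_assoc,
    nonsing_inv_mul_cancel_left _ _ hW, hR, inv_mul_cancel₀ hc, one_smul]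

theorem inv_sq_smul_mul_self_mul_smul_nonsing_inv_mul (hc : c ≠ 0) (hW : IsUnit W.det) :
    (c ^ 2)⁻¹ • (W * W) * (c • W⁻¹ * R) = c⁻¹ • (W * R) := by
  simp only [Matrix.mul_smul, Matrix.smul_mul, smul_smul, Matrix.mul_assoc,
    mul_nonsing_inv_cancel_left _ _ hW]
  congr 1
  field_simp

end Matrix

/-- **The variational covariance factor is a stationary point.**
Let `B ∈ ℝ^{m×k}`, `σ > 0`, and `R̃ ∈ ℝ^{k×k}` orthogonal. With `W` the unique
positive definite square root of `BᵀB + σ²I`, the matrix `U = σ W⁻¹ R̃`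
(i.e. `σ (BᵀB + σ²I)^{−1/2} R̃`) is invertible and satisfies the stationarity
equation `σ⁻² BᵀB U + U − (Uᵀ)⁻¹ = 0`. -/
theorem stmt8 {m k : ℕ} (B : Matrix (Fin m) (Fin k) ℝ) (σ : ℝ) (hσ : 0 < σ)
    (Rt : Matrix (Fin k) (Fin k) ℝ) (hRt : Rtᵀ * Rt = 1)
    (W : Matrix (Fin k) (Fin k) ℝ) (hWpd : W.PosDef)
    (hW : W * W = Bᵀ * B + σ^2 • (1 : Matrix (Fin k) (Fin k) ℝ))
    (U : Matrix (Fin k) (Fin k) ℝ) (hU : U = σ • W⁻¹ * Rt) :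
    IsUnit U ∧ (σ^2)⁻¹ • (Bᵀ * B) * U + U - (Uᵀ)⁻¹ = 0 := by
  have hσ0 : σ ≠ 0 := hσ.ne'
  have hWdet : IsUnit W.det := (isUnit_iff_isUnit_det W).1 hWpd.isUnit
  have hWsq : (σ ^ 2)⁻¹ • (Bᵀ * B) * U + U = (σ ^ 2)⁻¹ • (W * W) * U := by
    rw [hW, smul_add, Matrix.add_mul, smul_smul, inv_mul_cancel₀ (pow_ne_zero 2 hσ0), one_smul,
      Matrix.one_mul]
  subst hU
  refine ⟨isUnit_smul_nonsing_inv_mul hσ0 hWdet hRt, ?_⟩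
  rw [hWsq, inv_sq_smul_mul_self_mul_smul_nonsing_inv_mul hσ0 hWdet,
    transpose_smul_nonsing_inv_mul_inv hσ0 hWdet hWpd.isHermitian hRt, sub_self]
end

section
/- Let A ∈ ℝ^{m×n} have rank m, let G ∈ ℝ^{n×k}, σ > 0, let Y_N ∈ ℝ^{m×m} be symmetric, and set Σ_σ := GᵀAᵀA G + σ² I (positive definite). Then the stationarity equation AᵀA G (σ² I + Σ_σ⁻¹ GᵀAᵀ Y_N A G) Σ_σ⁻¹ = Aᵀ Y_N A G Σ_σ⁻¹ holds if and only if (I_m − A G Σ_σ⁻¹ GᵀAᵀ) Y_N A G = σ² A G. -/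
/-!
`Σ_σ` is positive definite, and `A Aᵀ` is invertible because `A` has full row rank, so
`Aᵀ` may be cancelled on the left and `Σ_σ⁻¹` on the right. After this cancellation both
equations say `Y_N A G = σ² A G + A G Σ_σ⁻¹ Gᵀ Aᵀ Y_N A G`.
-/

open Matrix

theorem Matrix.isUnit_of_rank_eq_card {n K : Type*} [Fintype n] [DecidableEq n] [Field K]
    {M : Matrix n n K} (h : M.rank = Fintype.card n) : IsUnit M := by
  rw [← mulVec_surjective_iff_isUnit, ← coe_mulVecLin, ← LinearMap.range_eq_top]
  apply Submodule.eq_top_of_finrank_eq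
  rw [← rank, h, Module.finrank_fintype_fun_eq_card]

theorem Matrix.posDef_conjTranspose_mul_self_add_smul_one {m n R : Type*} [Fintype m] [Fintype n]
    [DecidableEq n] [CommRing R] [PartialOrder R] [StarRing R] [StarOrderedRing R]
    [IsStrictOrderedRing R] [NoZeroDivisors R] (B : Matrix m n R) {c : R} (hc : 0 < c) :
    (Bᴴ * B + c • (1 : Matrix n n R)).PosDef :=
  PosDef.posSemidef_add (posSemidef_conjTranspose_mul_self B) (PosDef.one.smul hc)

theorem stmt9_general {m n k : ℕ} (A : Matrix (Fin m) (Fin n) ℝ) (hA : A.rank = m)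
    (G : Matrix (Fin n) (Fin k) ℝ) (σ : ℝ) (hσ : 0 < σ)
    (YN : Matrix (Fin m) (Fin m) ℝ)
    (S : Matrix (Fin k) (Fin k) ℝ)
    (hS : S = Gᵀ * Aᵀ * A * G + σ^2 • (1 : Matrix (Fin k) (Fin k) ℝ)) :
    (Aᵀ * A * G * (σ^2 • (1 : Matrix (Fin k) (Fin k) ℝ)
          + S⁻¹ * (Gᵀ * Aᵀ * YN * (A * G))) * S⁻¹
        = Aᵀ * YN * (A * G) * S⁻¹)
    ↔ ((1 - A * G * S⁻¹ * Gᵀ * Aᵀ) * YN * (A * G) = σ^2 • (A * G)) := by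
  have hS_det : IsUnit S.det := by
    have hS_posDef : S.PosDef := by
      have hgram : Gᵀ * Aᵀ * A * G = (A * G)ᴴ * (A * G) := by
        simp only [conjTranspose_eq_transpose_of_trivial, transpose_mul, Matrix.mul_assoc]
      rw [hS, hgram]
      exact posDef_conjTranspose_mul_self_add_smul_one (A * G) (by positivity)
    exact (isUnit_iff_isUnit_det S).mp hS_posDef.isUnit
  have hAAt_det : IsUnit (A * Aᵀ).det :=
    (isUnit_iff_isUnit_det _).mp <| isUnit_of_rank_eq_card <| by
      rw [rank_self_mul_transpose, hA, Fintype.card_fin]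
  have hSinv_inj := mul_left_injective_of_inv (l := Fin n) S⁻¹ S (nonsing_inv_mul S hS_det)
  have hAt_inj := mul_right_injective_of_inv (l := Fin k) ((A * Aᵀ)⁻¹ * A) Aᵀ
    (by rw [Matrix.mul_assoc, nonsing_inv_mul _ hAAt_det])
  set X := A * G * S⁻¹ * Gᵀ * Aᵀ * YN * (A * G)
  have hlhs : Aᵀ * A * G * (σ^2 • (1 : Matrix (Fin k) (Fin k) ℝ)
      + S⁻¹ * (Gᵀ * Aᵀ * YN * (A * G))) = Aᵀ * (σ^2 • (A * G) + X) := by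
    simp only [X, Matrix.mul_add, Matrix.mul_smul, Matrix.mul_one, Matrix.mul_assoc]
  have hrhs : (1 - A * G * S⁻¹ * Gᵀ * Aᵀ) * YN * (A * G) = YN * (A * G) - X := by
    simp only [X, Matrix.sub_mul, Matrix.one_mul, Matrix.mul_assoc]
  rw [hlhs, hrhs, Matrix.mul_assoc Aᵀ YN, hSinv_inj.eq_iff, hAt_inj.eq_iff,
    sub_eq_iff_eq_add, eq_comm]

/-- **Reduction of the gradient-in-G stationarity condition.**
Let `A ∈ ℝ^{m×n}` have rank `m`, `G ∈ ℝ^{n×k}`, `σ > 0`, `Y_N` symmetric, and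
`Σ_σ = GᵀAᵀAG + σ²I`. Then
`AᵀA G (σ² I + Σ_σ⁻¹ GᵀAᵀ Y_N A G) Σ_σ⁻¹ = Aᵀ Y_N A G Σ_σ⁻¹`
holds if and only if `(I_m − A G Σ_σ⁻¹ GᵀAᵀ) Y_N A G = σ² A G`. -/
theorem stmt9 {m n k : ℕ} (A : Matrix (Fin m) (Fin n) ℝ) (hA : A.rank = m)
    (G : Matrix (Fin n) (Fin k) ℝ) (σ : ℝ) (hσ : 0 < σ)
    (YN : Matrix (Fin m) (Fin m) ℝ) (hY : YNᵀ = YN)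
    (S : Matrix (Fin k) (Fin k) ℝ)
    (hS : S = Gᵀ * Aᵀ * A * G + σ^2 • (1 : Matrix (Fin k) (Fin k) ℝ)) :
    (Aᵀ * A * G * (σ^2 • (1 : Matrix (Fin k) (Fin k) ℝ)
          + S⁻¹ * (Gᵀ * Aᵀ * YN * (A * G))) * S⁻¹
        = Aᵀ * YN * (A * G) * S⁻¹)
    ↔ ((1 - A * G * S⁻¹ * Gᵀ * Aᵀ) * YN * (A * G) = σ^2 • (A * G)) :=
  stmt9_general A hA G σ hσ YN S hS
end

section
/- Let M ∈ ℝ^{m×k}, Y ∈ ℝ^{m×m} symmetric, and σ > 0. Suppose M = E D R where E ∈ ℝ^{m×k} has orthonormal columns, R ∈ ℝ^{k×k} is orthogonal, D = (L − σ² I)^{1/2} for a diagonal L ∈ ℝ^{k×k} with all diagonal entries L_ii ≥ σ², and Y E = E L. Then M satisfies the stationarity equation (I_m − M (MᵀM + σ² I)⁻¹ Mᵀ) Y M = σ² M. -/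
/-!
Write `M = E D R`. Since `Eᵀ E = 1` and `R` is orthogonal, `MᵀM + σ²I = Rᵀ (D² + σ²) R = Rᵀ L R`,
so `M (MᵀM + σ²I)⁻¹ Mᵀ = E D L⁻¹ D Eᵀ`, while `Y M = E L D R` because the columns of `E` are
eigenvectors of `Y`. All the middle factors are diagonal and commute, so the left-hand side is
`E (L − D²) D R = σ² E D R = σ² M`.
-/

open Matrix

namespace Matrix

variable {m n K : Type*} [Fintype n] [DecidableEq n] [Field K]
  {E : Matrix m n K} {R : Matrix n n K}

theorem inv_transpose_mul_diagonal_mul (hR : Rᵀ * R = 1) {l : n → K} (hl : ∀ i, l i ≠ 0) :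
    (Rᵀ * diagonal l * R)⁻¹ = Rᵀ * diagonal l⁻¹ * R := by
  have hRRt : R * Rᵀ = 1 := mul_eq_one_comm.mp hR
  have hll : diagonal l * diagonal l⁻¹ = 1 := by
    rw [diagonal_mul_diagonal, ← diagonal_one]
    exact congrArg diagonal (funext fun i => mul_inv_cancel₀ (hl i))
  apply inv_eq_right_inv
  calc Rᵀ * diagonal l * R * (Rᵀ * diagonal l⁻¹ * R)
      = Rᵀ * diagonal l * (R * Rᵀ) * diagonal l⁻¹ * R := by simp only [Matrix.mul_assoc]
    _ = 1 := by rw [hRRt, Matrix.mul_one, Matrix.mul_assoc Rᵀ, hll, Matrix.mul_one, hR]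

theorem mul_transpose_mul_diagonal_mul_mul_transpose (hR : Rᵀ * R = 1) (d w : n → K) :
    (E * diagonal d * R) * (Rᵀ * diagonal w * R) * (E * diagonal d * R)ᵀ
      = E * diagonal (fun i => d i * w i * d i) * Eᵀ := by
  have hRRt : R * Rᵀ = 1 := mul_eq_one_comm.mp hR
  calc (E * diagonal d * R) * (Rᵀ * diagonal w * R) * (E * diagonal d * R)ᵀ
      = E * diagonal d * (R * Rᵀ) * diagonal w * (R * Rᵀ) * diagonal d * Eᵀ := by
        simp only [transpose_mul, diagonal_transpose, Matrix.mul_assoc]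
    _ = E * diagonal (fun i => d i * w i * d i) * Eᵀ := by
        simp only [hRRt, Matrix.mul_one, diagonal_mul_diagonal, Matrix.mul_assoc]

variable [Fintype m]

theorem transpose_mul_self_add_smul_one (hE : Eᵀ * E = 1) (hR : Rᵀ * R = 1)
    (d : n → K) (c : K) :
    (E * diagonal d * R)ᵀ * (E * diagonal d * R) + c • 1
      = Rᵀ * diagonal (fun i => d i ^ 2 + c) * R := by
  have hc : c • (1 : Matrix n n K) = Rᵀ * diagonal (fun _ => c) * R := by
    rw [← smul_one_eq_diagonal, Matrix.mul_smul, Matrix.smul_mul, Matrix.mul_one, hR]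
  calc (E * diagonal d * R)ᵀ * (E * diagonal d * R) + c • 1
      = Rᵀ * (diagonal d * (Eᵀ * E) * diagonal d + diagonal (fun _ => c)) * R := by
        simp only [hc, transpose_mul, diagonal_transpose, Matrix.mul_add, Matrix.add_mul,
          Matrix.mul_assoc]
    _ = Rᵀ * diagonal (fun i => d i ^ 2 + c) * R := by
        rw [hE, Matrix.mul_one, diagonal_mul_diagonal, diagonal_add]
        simp only [sq]

theorem mul_diagonal_mul_transpose_mul_mul_diagonal_mul (hE : Eᵀ * E = 1) (g h : n → K)
    {p : Type*} (S : Matrix n p K) :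
    E * diagonal g * Eᵀ * (E * diagonal h * S) = E * diagonal (fun i => g i * h i) * S := by
  calc E * diagonal g * Eᵀ * (E * diagonal h * S)
      = E * diagonal g * (Eᵀ * E) * diagonal h * S := by
        simp only [Matrix.mul_assoc]
    _ = E * diagonal (fun i => g i * h i) * S := by
        rw [hE, Matrix.mul_one, Matrix.mul_assoc E, diagonal_mul_diagonal]

theorem mul_mul_diagonal_mul_of_mul_eq {Y : Matrix m m K} {l : n → K}
    (hYE : Y * E = E * diagonal l) (d : n → K) {p : Type*} (S : Matrix n p K) :
    Y * (E * diagonal d * S) = E * diagonal (fun i => l i * d i) * S := by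
  rw [← Matrix.mul_assoc, ← Matrix.mul_assoc, hYE, Matrix.mul_assoc E, diagonal_mul_diagonal]

theorem sub_mul_inv_mul_transpose_mul_mul_eq_smul [DecidableEq m] {Y : Matrix m m K} {l d : n → K}
    {c : K} {M : Matrix m n K} (hE : Eᵀ * E = 1) (hR : Rᵀ * R = 1)
    (hYE : Y * E = E * diagonal l) (hl : ∀ i, l i ≠ 0) (hdl : ∀ i, d i ^ 2 + c = l i)
    (hM : M = E * diagonal d * R) :
    (1 - M * (Mᵀ * M + c • 1)⁻¹ * Mᵀ) * Y * M = c • M := by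
  have hP : M * (Mᵀ * M + c • 1)⁻¹ * Mᵀ
      = E * diagonal (fun i => d i * (l i)⁻¹ * d i) * Eᵀ := by
    rw [hM, transpose_mul_self_add_smul_one hE hR, funext hdl,
      inv_transpose_mul_diagonal_mul hR hl, mul_transpose_mul_diagonal_mul_mul_transpose hR]
    rfl
  have hdiag : (fun i => l i * d i - d i * (l i)⁻¹ * d i * (l i * d i)) = c • d := by
    funext i
    have hll : (l i)⁻¹ * l i = 1 := inv_mul_cancel₀ (hl i)
    simp only [Pi.smul_apply, smul_eq_mul]
    linear_combination (-d i) * hdl i - d i ^ 3 * hll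
  rw [Matrix.mul_assoc, Matrix.sub_mul, Matrix.one_mul, hP, hM,
    mul_mul_diagonal_mul_of_mul_eq hYE, mul_diagonal_mul_transpose_mul_mul_diagonal_mul hE,
    ← Matrix.sub_mul, ← Matrix.mul_sub, diagonal_sub, hdiag, diagonal_smul, Matrix.mul_smul,
    Matrix.smul_mul]

end Matrix

theorem stmt10_general {m k : ℕ} (M : Matrix (Fin m) (Fin k) ℝ)
    (Y : Matrix (Fin m) (Fin m) ℝ) (σ : ℝ) (hσ : 0 < σ)
    (E : Matrix (Fin m) (Fin k) ℝ) (hE : Eᵀ * E = 1)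
    (R : Matrix (Fin k) (Fin k) ℝ) (hR : Rᵀ * R = 1)
    (L : Fin k → ℝ) (hL : ∀ i, σ^2 ≤ L i)
    (hM : M = E * Matrix.diagonal (fun i => Real.sqrt (L i - σ^2)) * R)
    (hYE : Y * E = E * Matrix.diagonal L) :
    (1 - M * (Mᵀ * M + σ^2 • (1 : Matrix (Fin k) (Fin k) ℝ))⁻¹ * Mᵀ) * Y * M
      = σ^2 • M := by
  refine sub_mul_inv_mul_transpose_mul_mul_eq_smul hE hR hYE (fun i => ?_) (fun i => ?_) hM
  · exact ((pow_pos hσ 2).trans_le (hL i)).ne'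
  · rw [Real.sq_sqrt (sub_nonneg.2 (hL i)), sub_add_cancel]

/-- **The PCA-type matrix satisfies the stationarity equation.**
Let `M ∈ ℝ^{m×k}`, `Y ∈ ℝ^{m×m}` symmetric, `σ > 0`. If `M = E D R` with `E`
having orthonormal columns, `R` orthogonal, `D = (L − σ²I)^{1/2}` for diagonal
`L` with entries `≥ σ²`, and `Y E = E L`, then
`(I_m − M (MᵀM + σ²I)⁻¹ Mᵀ) Y M = σ² M`. -/
theorem stmt10 {m k : ℕ} (M : Matrix (Fin m) (Fin k) ℝ)
    (Y : Matrix (Fin m) (Fin m) ℝ) (hY : Yᵀ = Y) (σ : ℝ) (hσ : 0 < σ)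
    (E : Matrix (Fin m) (Fin k) ℝ) (hE : Eᵀ * E = 1)
    (R : Matrix (Fin k) (Fin k) ℝ) (hR : Rᵀ * R = 1)
    (L : Fin k → ℝ) (hL : ∀ i, σ^2 ≤ L i)
    (hM : M = E * Matrix.diagonal (fun i => Real.sqrt (L i - σ^2)) * R)
    (hYE : Y * E = E * Matrix.diagonal L) :
    (1 - M * (Mᵀ * M + σ^2 • (1 : Matrix (Fin k) (Fin k) ℝ))⁻¹ * Mᵀ) * Y * M
      = σ^2 • M :=
  stmt10_general M Y σ hσ E hE R hR L hL hM hYE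
end

section
/- Let M ∈ ℝ^{m×k} have full column rank k with smallest singular value σ_k(M) > 0. Then for every σ ≥ 0, the spectral norm bound ‖(MᵀM + σ² I)⁻¹ Mᵀ − (MᵀM)⁻¹ Mᵀ‖ ≤ σ² / σ_k(M)³ holds. -/
open Matrix

/-- The spectral (ℓ² operator) norm of a real matrix. -/
noncomputable def specNorm {a b : ℕ} (M : Matrix (Fin a) (Fin b) ℝ) : ℝ :=
  ‖LinearMap.toContinuousLinearMap (Matrix.toEuclideanLin M)‖

/-- The Euclidean norm of a vector in `ℝᵃ`. -/
noncomputable def evnorm {a : ℕ} (v : Fin a → ℝ) : ℝ := Real.sqrt (∑ i, v i ^ 2)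

/-! Write `A = MᵀM` and `B = A + σ²I`. The resolvent identity gives
`B⁻¹Mᵀ - A⁻¹Mᵀ = -σ² B⁻¹ (A⁻¹Mᵀ)`. Since `⟪x, Bx⟫ ≥ ‖Mx‖² ≥ s²‖x‖²`, we get `‖B⁻¹‖ ≤ 1/s²`.
For `x = A⁻¹Mᵀy` the normal equations `Ax = Mᵀy` give `‖Mx‖² = ⟪Mx, y⟫`, so `‖Mx‖ ≤ ‖y‖` and
`‖A⁻¹Mᵀ‖ ≤ 1/s`. -/

open WithLp
open scoped Matrix.Norms.L2Operator RealInnerProductSpace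

namespace Matrix

variable {𝕜 m n : Type*} [RCLike 𝕜] [Fintype m] [Fintype n] [DecidableEq n]

lemma l2_opNorm_le_of_forall_norm_toEuclideanLin_le {A : Matrix m n 𝕜} {C : ℝ} (hC : 0 ≤ C)
    (h : ∀ x, ‖toEuclideanLin A x‖ ≤ C * ‖x‖) : ‖A‖ ≤ C :=
  ContinuousLinearMap.opNorm_le_bound _ hC h

lemma isUnit_of_forall_le_norm_toEuclideanLin {A : Matrix n n 𝕜} {c : ℝ} (hc : 0 < c)
    (h : ∀ x, c * ‖x‖ ≤ ‖toEuclideanLin A x‖) : IsUnit A := by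
  refine mulVec_injective_iff_isUnit.mp fun x y hxy => ?_
  have hzero : toEuclideanLin A (toLp 2 (x - y)) = 0 := by
    simp [toLpLin_apply, mulVec_sub, hxy]
  have hle := h (toLp 2 (x - y))
  rw [hzero, norm_zero] at hle
  have : ‖toLp 2 (x - y)‖ = 0 := le_antisymm (nonpos_of_mul_nonpos_right hle hc) (norm_nonneg _)
  simpa [sub_eq_zero] using this

lemma toEuclideanLin_toEuclideanLin_inv {A : Matrix n n 𝕜} (hA : IsUnit A)
    (y : EuclideanSpace 𝕜 n) : toEuclideanLin A (toEuclideanLin A⁻¹ y) = y := by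
  rw [← LinearMap.comp_apply, ← toLpLin_mul_same,
    mul_nonsing_inv A ((isUnit_iff_isUnit_det A).mp hA), toLpLin_one, LinearMap.id_apply]

lemma l2_opNorm_inv_le_of_forall_le_norm_toEuclideanLin {A : Matrix n n 𝕜} {c : ℝ} (hc : 0 < c)
    (h : ∀ x, c * ‖x‖ ≤ ‖toEuclideanLin A x‖) : ‖A⁻¹‖ ≤ c⁻¹ := by
  have hA := isUnit_of_forall_le_norm_toEuclideanLin hc h
  refine l2_opNorm_le_of_forall_norm_toEuclideanLin_le (inv_nonneg.2 hc.le) fun y => ?_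
  rw [inv_mul_eq_div, le_div_iff₀' hc]
  simpa only [toEuclideanLin_toEuclideanLin_inv hA] using h (toEuclideanLin A⁻¹ y)

lemma inv_add_smul_one_sub_inv {R : Type*} [CommRing R] {A : Matrix n n R} {t : R}
    (hA : IsUnit A) (hB : IsUnit (A + t • 1)) :
    (A + t • 1)⁻¹ - A⁻¹ = -t • ((A + t • 1)⁻¹ * A⁻¹) := by
  rw [inv_sub_inv (iff_of_true hB hA)]
  simp

variable [DecidableEq m]

lemma inner_toEuclideanLin_transpose (M : Matrix m n ℝ) (x : EuclideanSpace ℝ n)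
    (y : EuclideanSpace ℝ m) : ⟪x, toEuclideanLin Mᵀ y⟫ = ⟪toEuclideanLin M x, y⟫ := by
  rw [← conjTranspose_eq_transpose_of_trivial, toEuclideanLin_conjTranspose_eq_adjoint,
    LinearMap.adjoint_inner_right]

lemma inner_toEuclideanLin_gram (M : Matrix m n ℝ) (x : EuclideanSpace ℝ n) :
    ⟪x, toEuclideanLin (Mᵀ * M) x⟫ = ‖toEuclideanLin M x‖ ^ 2 := by
  simp [inner_toEuclideanLin_transpose]

lemma sq_mul_norm_le_norm_toEuclideanLin_gram_add_smul {M : Matrix m n ℝ} {s t : ℝ} (hs : 0 ≤ s)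
    (ht : 0 ≤ t) (hM : ∀ x, s * ‖x‖ ≤ ‖toEuclideanLin M x‖) (x : EuclideanSpace ℝ n) :
    s ^ 2 * ‖x‖ ≤ ‖toEuclideanLin (Mᵀ * M + t • 1) x‖ := by
  rcases (norm_nonneg x).eq_or_lt with hx | hx
  · rw [← hx, mul_zero]; exact norm_nonneg _
  refine le_of_mul_le_mul_right ?_ hx
  calc s ^ 2 * ‖x‖ * ‖x‖ = (s * ‖x‖) ^ 2 := by ring
    _ ≤ ‖toEuclideanLin M x‖ ^ 2 + t * ‖x‖ ^ 2 :=
      le_add_of_le_of_nonneg (pow_le_pow_left₀ (by positivity) (hM x) 2) (by positivity)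
    _ = ⟪x, toEuclideanLin (Mᵀ * M + t • 1) x⟫ := by
      rw [map_add, LinearMap.add_apply, inner_add_right, inner_toEuclideanLin_gram]
      simp [inner_smul_right]
    _ ≤ ‖x‖ * ‖toEuclideanLin (Mᵀ * M + t • 1) x‖ := real_inner_le_norm _ _
    _ = _ := mul_comm _ _

lemma isUnit_gram_add_smul {M : Matrix m n ℝ} {s t : ℝ} (hs : 0 < s) (ht : 0 ≤ t)
    (hM : ∀ x, s * ‖x‖ ≤ ‖toEuclideanLin M x‖) : IsUnit (Mᵀ * M + t • 1) :=
  isUnit_of_forall_le_norm_toEuclideanLin (by positivity)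
    (sq_mul_norm_le_norm_toEuclideanLin_gram_add_smul hs.le ht hM)

lemma l2_opNorm_inv_gram_add_smul_le {M : Matrix m n ℝ} {s t : ℝ} (hs : 0 < s) (ht : 0 ≤ t)
    (hM : ∀ x, s * ‖x‖ ≤ ‖toEuclideanLin M x‖) : ‖(Mᵀ * M + t • 1)⁻¹‖ ≤ (s ^ 2)⁻¹ :=
  l2_opNorm_inv_le_of_forall_le_norm_toEuclideanLin (by positivity)
    (sq_mul_norm_le_norm_toEuclideanLin_gram_add_smul hs.le ht hM)

lemma isUnit_gram {M : Matrix m n ℝ} {s : ℝ} (hs : 0 < s)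
    (hM : ∀ x, s * ‖x‖ ≤ ‖toEuclideanLin M x‖) : IsUnit (Mᵀ * M) := by
  simpa using isUnit_gram_add_smul hs le_rfl hM

lemma l2_opNorm_inv_gram_mul_transpose_le {M : Matrix m n ℝ} {s : ℝ} (hs : 0 < s)
    (hM : ∀ x, s * ‖x‖ ≤ ‖toEuclideanLin M x‖) : ‖(Mᵀ * M)⁻¹ * Mᵀ‖ ≤ s⁻¹ := by
  refine l2_opNorm_le_of_forall_norm_toEuclideanLin_le (inv_nonneg.2 hs.le) fun y => ?_
  rw [toLpLin_mul_same, LinearMap.comp_apply]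
  set x := toEuclideanLin (Mᵀ * M)⁻¹ (toEuclideanLin Mᵀ y)
  have hnormal : toEuclideanLin (Mᵀ * M) x = toEuclideanLin Mᵀ y :=
    toEuclideanLin_toEuclideanLin_inv (isUnit_gram hs hM) _
  have hsq : ‖toEuclideanLin M x‖ ^ 2 ≤ ‖toEuclideanLin M x‖ * ‖y‖ := by
    rw [← inner_toEuclideanLin_gram, hnormal, inner_toEuclideanLin_transpose]
    exact real_inner_le_norm _ _
  have hMx : ‖toEuclideanLin M x‖ ≤ ‖y‖ := by
    nlinarith [norm_nonneg (toEuclideanLin M x), norm_nonneg y]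
  rw [inv_mul_eq_div, le_div_iff₀' hs]
  exact (hM x).trans hMx

end Matrix

lemma specNorm_eq_l2_opNorm {a b : ℕ} (M : Matrix (Fin a) (Fin b) ℝ) : specNorm M = ‖M‖ := rfl

lemma evnorm_eq_norm_toLp {a : ℕ} (v : Fin a → ℝ) : evnorm v = ‖toLp 2 v‖ := by
  simp [evnorm, EuclideanSpace.norm_eq]

theorem stmt16_general {m k : ℕ} (M : Matrix (Fin m) (Fin k) ℝ) (s : ℝ) (hs : 0 < s)
    (hlow : ∀ x : Fin k → ℝ, s * evnorm x ≤ evnorm (M *ᵥ x))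
    (σ : ℝ) :
    specNorm ((Mᵀ * M + σ^2 • (1 : Matrix (Fin k) (Fin k) ℝ))⁻¹ * Mᵀ
        - (Mᵀ * M)⁻¹ * Mᵀ)
      ≤ σ^2 / s^3 := by
  have hM : ∀ x, s * ‖x‖ ≤ ‖toEuclideanLin M x‖ := fun x => by
    simpa only [evnorm_eq_norm_toLp, toLpLin_apply, toLp_ofLp] using hlow (ofLp x)
  have hσ2 : 0 ≤ σ ^ 2 := sq_nonneg σ
  rw [specNorm_eq_l2_opNorm, ← Matrix.sub_mul,
    inv_add_smul_one_sub_inv (isUnit_gram hs hM) (isUnit_gram_add_smul hs hσ2 hM),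
    Matrix.smul_mul, Matrix.mul_assoc, norm_smul, norm_neg, Real.norm_of_nonneg hσ2]
  calc σ ^ 2 * ‖(Mᵀ * M + σ ^ 2 • 1)⁻¹ * ((Mᵀ * M)⁻¹ * Mᵀ)‖
      ≤ σ ^ 2 * (‖(Mᵀ * M + σ ^ 2 • 1)⁻¹‖ * ‖(Mᵀ * M)⁻¹ * Mᵀ‖) := by
        gcongr
        exact l2_opNorm_mul _ _
    _ ≤ σ ^ 2 * ((s ^ 2)⁻¹ * s⁻¹) := by
      gcongr
      exacts [l2_opNorm_inv_gram_add_smul_le hs hσ2 hM, l2_opNorm_inv_gram_mul_transpose_le hs hM]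
    _ = σ ^ 2 / s ^ 3 := by field_simp

/-- **Regularized pseudoinverse perturbation bound.**
Let `M ∈ ℝ^{m×k}` have full column rank with smallest singular value
`s = σ_k(M) > 0` (characterized by `s‖x‖ ≤ ‖Mx‖` for all `x`, with equality
attained by some `x ≠ 0`). Then for every `σ ≥ 0`,
`‖(MᵀM + σ²I)⁻¹Mᵀ − (MᵀM)⁻¹Mᵀ‖ ≤ σ²/σ_k(M)³` in spectral norm. -/
theorem stmt16 {m k : ℕ} (M : Matrix (Fin m) (Fin k) ℝ) (s : ℝ) (hs : 0 < s)
    (hlow : ∀ x : Fin k → ℝ, s * evnorm x ≤ evnorm (M *ᵥ x))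
    (hach : ∃ x : Fin k → ℝ, x ≠ 0 ∧ evnorm (M *ᵥ x) = s * evnorm x)
    (σ : ℝ) (hσ : 0 ≤ σ) :
    specNorm ((Mᵀ * M + σ^2 • (1 : Matrix (Fin k) (Fin k) ℝ))⁻¹ * Mᵀ
        - (Mᵀ * M)⁻¹ * Mᵀ)
      ≤ σ^2 / s^3 :=
  stmt16_general M s hs hlow σ
end
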